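/- Let N ≥ 1, T ≥ 1, ε > 0, η > 0, and for i = 1,…,N let β_i ≥ 0. Let s̃_i(t) (t = 0,…,T) satisfy s̃_i(0) = 0 and s̃_i(t) ≥ 0, and let D(t) satisfy ∑_{i=1}^N s̃_i(t) = D(t) for all t = 1,…,T. Suppose there exist λ̃_t and l̃_{i,t} ≥ 0 with s̃_i(t)·l̃_{i,t} = 0 and (β_i/η)·ln((s̃_i(t)+ε/N)/(s̃_i(t−1)+ε/N)) = λ̃_t − c_i(t) + l̃_{i,t} for all i and t. Then ∑_{t=1}^T ∑_{i=1}^N c_i(t)·s̃_i(t) ≤ ∑_{t=1}^T λ̃_t·D(t). -/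

import Mathlib

/-!
Multiply the stationarity condition of slot `t` by `s̃ᵢ(t)`: complementary slackness kills the
`l̃` term, and summing over `i` gives
`∑ᵢ cᵢ(t) s̃ᵢ(t) = λ̃ₜ D(t) - ∑ᵢ (βᵢ/η) s̃ᵢ(t) log((s̃ᵢ(t)+a)/(s̃ᵢ(t-1)+a))` with `a = ε/N`.
It remains to see that the accumulated regularization term `∑ₜ f(t) log((f(t)+a)/(f(t-1)+a))`
is nonnegative for `f ≥ 0` with `f(0) = 0`. With the potential `ψ(x) = x - a log x`, each
summand dominates `ψ(f(t)+a) - ψ(f(t-1)+a)` (this is `u - v ≤ u log(u/v)`), so the sum is at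
least `ψ(f(T)+a) - ψ(a) ≥ 0`, since `ψ` is minimal at `a`.
-/

open Finset Real

theorem Finset.sum_Icc_one_sub_pred {M : Type*} [AddCommGroup M] (g : ℕ → M) (T : ℕ) :
    ∑ t ∈ Icc 1 T, (g t - g (t - 1)) = g T - g 0 := by
  induction T with
  | zero => simp
  | succ n ih =>
    rw [sum_Icc_succ_top (by omega), ih, Nat.add_sub_cancel]
    abel

namespace Real

theorem sub_le_mul_log_div {u v : ℝ} (hu : 0 < u) (hv : 0 < v) : u - v ≤ u * log (u / v) := by
  have h := one_sub_inv_le_log_of_pos (div_pos hu hv)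
  rw [inv_div] at h
  calc u - v = u * (1 - v / u) := by field_simp
    _ ≤ u * log (u / v) := mul_le_mul_of_nonneg_left h hu.le

theorem sum_mul_log_div_shift_nonneg {a : ℝ} (ha : 0 < a) (f : ℕ → ℝ) (hf0 : f 0 = 0)
    (hf : ∀ t, 0 ≤ f t) (T : ℕ) :
    0 ≤ ∑ t ∈ Icc 1 T, f t * log ((f t + a) / (f (t - 1) + a)) := by
  set ψ : ℝ → ℝ := fun x => x - a * log x
  have hpos : ∀ t, 0 < f t + a := fun t => by linarith [hf t]
  have hstep : ∀ t ∈ Icc 1 T,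
      ψ (f t + a) - ψ (f (t - 1) + a) ≤ f t * log ((f t + a) / (f (t - 1) + a)) := by
    intro t _
    have h := sub_le_mul_log_div (hpos t) (hpos (t - 1))
    rw [log_div (hpos t).ne' (hpos (t - 1)).ne'] at h ⊢
    simp only [ψ]
    linarith
  have hmin : ψ a ≤ ψ (f T + a) := by
    have h := sub_le_mul_log_div ha (hpos T)
    rw [log_div ha.ne' (hpos T).ne'] at h
    simp only [ψ]
    linarith
  calc (0 : ℝ) ≤ ψ (f T + a) - ψ (f 0 + a) := by rw [hf0, zero_add]; linarith
    _ = ∑ t ∈ Icc 1 T, (ψ (f t + a) - ψ (f (t - 1) + a)) :=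
      (sum_Icc_one_sub_pred (fun t => ψ (f t + a)) T).symm
    _ ≤ _ := sum_le_sum hstep

end Real

theorem operating_cost_bound_case1_general
    (N T : ℕ) (hN : 1 ≤ N)
    (ε : ℝ) (hε : 0 < ε)
    (η : ℝ) (hη : 0 < η)
    (β : Fin N → ℝ) (hβ : ∀ i, 0 ≤ β i)
    (c : Fin N → ℕ → ℝ)
    (st : Fin N → ℕ → ℝ)
    (hst0 : ∀ i, st i 0 = 0)
    (hst_nonneg : ∀ i t, 0 ≤ st i t)
    (D : ℕ → ℝ)
    (hsum : ∀ t ∈ Finset.Icc 1 T, ∑ i, st i t = D t)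
    (lam : ℕ → ℝ)
    (l : Fin N → ℕ → ℝ)
    (hcs : ∀ i, ∀ t ∈ Finset.Icc 1 T, st i t * l i t = 0)
    (hstat : ∀ i, ∀ t ∈ Finset.Icc 1 T,
      (β i / η) * Real.log ((st i t + ε / N) / (st i (t - 1) + ε / N)) =
        lam t - c i t + l i t) :
    ∑ t ∈ Finset.Icc 1 T, ∑ i, c i t * st i t ≤
      ∑ t ∈ Finset.Icc 1 T, lam t * D t := by
  set R : Fin N → ℕ → ℝ := fun i t =>
    st i t * log ((st i t + ε / N) / (st i (t - 1) + ε / N))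
  have hslot : ∀ t ∈ Icc 1 T, ∑ i, c i t * st i t = lam t * D t - ∑ i, (β i / η) * R i t := by
    intro t ht
    rw [← hsum t ht, mul_sum, ← sum_sub_distrib]
    refine sum_congr rfl fun i _ => ?_
    linear_combination st i t * hstat i t ht + hcs i t ht
  have hreg : 0 ≤ ∑ i, ∑ t ∈ Icc 1 T, (β i / η) * R i t := by
    have ha : 0 < ε / N := div_pos hε (by exact_mod_cast hN)
    refine sum_nonneg fun i _ => ?_
    rw [← mul_sum]
    exact mul_nonneg (div_nonneg (hβ i) hη.le)
      (sum_mul_log_div_shift_nonneg ha (st i) (hst0 i) (hst_nonneg i) T)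
  rw [sum_congr rfl hslot, sum_sub_distrib, sum_comm (f := fun t i => (β i / η) * R i t)]
  linarith

/-- Bound on the total operating cost `S` of the online regularization
algorithm with switching cost offset, case `1 ≤ K_s ≤ K_c`. -/
theorem operating_cost_bound_case1
    (N T : ℕ) (hN : 1 ≤ N) (hT : 1 ≤ T)
    (ε : ℝ) (hε : 0 < ε)
    (η : ℝ) (hη : 0 < η)
    (β : Fin N → ℝ) (hβ : ∀ i, 0 ≤ β i)
    (c : Fin N → ℕ → ℝ)
    (st : Fin N → ℕ → ℝ)
    (hst0 : ∀ i, st i 0 = 0)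
    (hst_nonneg : ∀ i t, 0 ≤ st i t)
    (D : ℕ → ℝ)
    (hsum : ∀ t ∈ Finset.Icc 1 T, ∑ i, st i t = D t)
    (lam : ℕ → ℝ)
    (l : Fin N → ℕ → ℝ) (hl : ∀ i, ∀ t ∈ Finset.Icc 1 T, 0 ≤ l i t)
    (hcs : ∀ i, ∀ t ∈ Finset.Icc 1 T, st i t * l i t = 0)
    (hstat : ∀ i, ∀ t ∈ Finset.Icc 1 T,
      (β i / η) * Real.log ((st i t + ε / N) / (st i (t - 1) + ε / N)) =
        lam t - c i t + l i t) :
    ∑ t ∈ Finset.Icc 1 T, ∑ i, c i t * st i t ≤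
      ∑ t ∈ Finset.Icc 1 T, lam t * D t :=
  operating_cost_bound_case1_general N T hN ε hε η hη β hβ c st hst0 hst_nonneg D hsum lam l hcs
    hstat
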